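/- arXiv:2508.09646 — 5 statements merged into one kernel-verified Lean document; each statement's English description precedes it below -/
import Mathlib

section
/- Full power usage necessity (Theorem 1): Assume m_tx > m_ue ≥ 2, ω_k > 0 for all k, β_i > 0 for all i, the block matrix [H | I_{m_tx}] ∈ ℂ^{m_tx×(m_ue+m_tx)} (the channel matrix augmented by the m_tx×m_tx identity) has full Kruskal rank m_tx, P is Pareto-optimal under the per-antenna power constraints, and S_k ≠ 0 for every k = 1,…,m_ue. Then either ‖e_i^* P‖₂² = β_i for every i = 1,…,m_tx (P utilizes full power), or there exists k with S_k·L_k/W_k² ≥ 1/(m_ue − 1). -/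
open Matrix Finset

noncomputable def Gmat {mtx mue : ℕ} (H P : Matrix (Fin mtx) (Fin mue) ℂ) :
    Matrix (Fin mue) (Fin mue) ℂ := Hᴴ * P

noncomputable def Sval {mtx mue : ℕ} (H P : Matrix (Fin mtx) (Fin mue) ℂ) (k : Fin mue) : ℝ :=
  ‖Gmat H P k k‖ ^ 2

noncomputable def Ival {mtx mue : ℕ} (H P : Matrix (Fin mtx) (Fin mue) ℂ) (k : Fin mue) : ℝ :=
  ∑ j ∈ Finset.univ.erase k, ‖Gmat H P k j‖ ^ 2

noncomputable def Wval {mtx mue : ℕ} (H P : Matrix (Fin mtx) (Fin mue) ℂ)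
    (ω : Fin mue → ℝ) (k : Fin mue) : ℝ := Ival H P k + ω k ^ 2

noncomputable def Lval {mtx mue : ℕ} (H P : Matrix (Fin mtx) (Fin mue) ℂ) (k : Fin mue) : ℝ :=
  ∑ j ∈ Finset.univ.erase k, ‖Gmat H P j k‖ ^ 2

noncomputable def SINR {mtx mue : ℕ} (H P : Matrix (Fin mtx) (Fin mue) ℂ)
    (ω : Fin mue → ℝ) (k : Fin mue) : ℝ := Sval H P k / Wval H P ω k

def PowerOK {mtx mue : ℕ} (β : Fin mtx → ℝ) (P : Matrix (Fin mtx) (Fin mue) ℂ) : Prop :=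
  ∀ i, ∑ j, ‖P i j‖ ^ 2 ≤ β i

def ParetoOptimal {mtx mue : ℕ} (H : Matrix (Fin mtx) (Fin mue) ℂ) (ω : Fin mue → ℝ)
    (β : Fin mtx → ℝ) (P : Matrix (Fin mtx) (Fin mue) ℂ) : Prop :=
  PowerOK β P ∧ ¬ ∃ Q : Matrix (Fin mtx) (Fin mue) ℂ, PowerOK β Q ∧
    (∀ k, SINR H P ω k ≤ SINR H Q ω k) ∧ (∃ k, SINR H P ω k < SINR H Q ω k)

/-- A matrix with `m` rows has full Kruskal rank `m` if every `m` of its columns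
are linearly independent. -/
def FullKruskal {m : ℕ} {N : Type*} (A : Matrix (Fin m) N ℂ) : Prop :=
  ∀ f : Fin m → N, Function.Injective f →
    LinearIndependent ℂ fun i => fun r => A r (f i)

lemma exists_subinvariant (m : ℕ) (hm : 2 ≤ m) (Z : Matrix (Fin m) (Fin m) ℝ)
    (hZ0 : ∀ k j, 0 ≤ Z k j) (hdiag : ∀ k, Z k k = 0)
    (hcol : ∀ j, ∑ k, (Z k j)^2 < 1 / ((m:ℝ) - 1)) :
    ∃ μ : Fin m → ℝ, (∀ k, 1 ≤ μ k) ∧ ∀ k, ∑ j, Z k j * μ j < μ k := by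
  have hm0 : 0 < m := by omega
  haveI : Nonempty (Fin m) := ⟨⟨0, hm0⟩⟩
  have hne : (Finset.univ : Finset (Fin m)).Nonempty := univ_nonempty
  have hm1 : (0:ℝ) < (m:ℝ) - 1 := by
    have : (2:ℝ) ≤ (m:ℝ) := by exact_mod_cast hm
    linarith
  set c : Fin m → ℝ := fun j => ∑ k, (Z k j)^2 with hc
  set cmax : ℝ := univ.sup' hne c with hcmax
  have hle : ∀ j, c j ≤ cmax := fun j => le_sup' c (mem_univ j)
  have hcmax_lt : cmax < 1 / ((m:ℝ) - 1) := by
    rw [hcmax, sup'_lt_iff]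
    exact fun j _ => hcol j
  set q2 : ℝ := max 0 (((m:ℝ) - 1) * cmax) with hq2
  have hq2nn : 0 ≤ q2 := le_max_left _ _
  have hq2lt : q2 < 1 := by
    apply max_lt one_pos
    calc ((m:ℝ) - 1) * cmax < ((m:ℝ) - 1) * (1 / ((m:ℝ)-1)) :=
          mul_lt_mul_of_pos_left hcmax_lt hm1
      _ = 1 := by field_simp
  have key : ∀ x : Fin m → ℝ, ∑ k, (∑ j, Z k j * x j)^2 ≤ q2 * ∑ j, (x j)^2 := by
    intro x
    have step1 : ∀ k, (∑ j, Z k j * x j)^2 ≤ ((m:ℝ) - 1) * ∑ j, (Z k j)^2 * (x j)^2 := by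
      intro k
      have hz : Z k k * x k = 0 := by rw [hdiag k]; ring
      have he : ∑ j ∈ univ.erase k, Z k j * x j = ∑ j, Z k j * x j :=
        Finset.sum_erase univ hz
      rw [← he]
      have hcard : (#(univ.erase k) : ℝ) = (m:ℝ) - 1 := by
        rw [card_erase_of_mem (mem_univ k), card_univ, Fintype.card_fin]
        rw [Nat.cast_sub (by omega : 1 ≤ m)]
        norm_num
      calc (∑ j ∈ univ.erase k, Z k j * x j)^2
          ≤ (#(univ.erase k) : ℝ) * ∑ j ∈ univ.erase k, (Z k j * x j)^2 := by
            exact sq_sum_le_card_mul_sum_sq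
        _ = ((m:ℝ) - 1) * ∑ j ∈ univ.erase k, (Z k j)^2 * (x j)^2 := by
            rw [hcard]
            congr 1
            exact Finset.sum_congr rfl fun j _ => by ring
        _ ≤ ((m:ℝ) - 1) * ∑ j, (Z k j)^2 * (x j)^2 := by
            apply mul_le_mul_of_nonneg_left _ (le_of_lt hm1)
            exact Finset.sum_le_sum_of_subset_of_nonneg (subset_univ _)
              (fun j _ _ => by positivity)
    calc ∑ k, (∑ j, Z k j * x j)^2
        ≤ ∑ k, ((m:ℝ) - 1) * ∑ j, (Z k j)^2 * (x j)^2 := Finset.sum_le_sum fun k _ => step1 k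
      _ = ∑ j, ∑ k, ((m:ℝ)-1) * ((Z k j)^2 * (x j)^2) := by
          rw [← Finset.sum_comm]
          exact Finset.sum_congr rfl fun k _ => by rw [Finset.mul_sum]
      _ = ∑ j, (((m:ℝ)-1) * c j) * (x j)^2 := by
          refine Finset.sum_congr rfl fun j _ => ?_
          rw [← Finset.mul_sum, ← Finset.sum_mul, hc]
          ring
      _ ≤ ∑ j, q2 * (x j)^2 := by
          apply Finset.sum_le_sum; intro j _
          apply mul_le_mul_of_nonneg_right _ (sq_nonneg _)
          calc ((m:ℝ)-1) * c j ≤ ((m:ℝ)-1) * cmax :=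
                mul_le_mul_of_nonneg_left (hle j) (le_of_lt hm1)
            _ ≤ q2 := le_max_right _ _
      _ = q2 * ∑ j, (x j)^2 := by rw [Finset.mul_sum]
  -- iterates
  set y : ℕ → Fin m → ℝ := fun n => (Z^n) *ᵥ (fun _ => 1) with hy
  have hy0 : ∀ k, y 0 k = 1 := by intro k; simp [hy]
  have hysucc : ∀ n k, y (n+1) k = ∑ j, Z k j * y n j := by
    intro n k
    have : (Z^(n+1)) *ᵥ (fun _ => 1) = Z *ᵥ ((Z^n) *ᵥ (fun _ => 1)) := by
      rw [Matrix.mulVec_mulVec, ← pow_succ']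
    simp only [hy, this, Matrix.mulVec, dotProduct]
  have hynn : ∀ n k, 0 ≤ y n k := by
    intro n
    induction n with
    | zero => intro k; rw [hy0]; norm_num
    | succ n ih =>
      intro k
      rw [hysucc]
      exact Finset.sum_nonneg fun j _ => mul_nonneg (hZ0 k j) (ih j)
  have hysq : ∀ n, ∑ k, (y n k)^2 ≤ q2^n * m := by
    intro n
    induction n with
    | zero => simp [hy0]
    | succ n ih =>
      calc ∑ k, (y (n+1) k)^2 = ∑ k, (∑ j, Z k j * y n j)^2 := by
            exact Finset.sum_congr rfl fun k _ => by rw [hysucc]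
        _ ≤ q2 * ∑ j, (y n j)^2 := key _
        _ ≤ q2 * (q2^n * m) := mul_le_mul_of_nonneg_left ih hq2nn
        _ = q2^(n+1) * m := by ring
  obtain ⟨N, hN⟩ : ∃ N : ℕ, q2^N < 1 / m := exists_pow_lt_of_lt_one (by positivity) hq2lt
  have hyNlt : ∀ k, y (N+1) k < 1 := by
    intro k
    have h1 : (y (N+1) k)^2 ≤ ∑ k', (y (N+1) k')^2 :=
      Finset.single_le_sum (f := fun k' => (y (N+1) k')^2) (fun k' _ => sq_nonneg _) (mem_univ k)
    have h2 : q2^(N+1) * m < 1 := by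
      have : q2^(N+1) ≤ q2^N := by
        calc q2^(N+1) = q2^N * q2 := by ring
          _ ≤ q2^N * 1 := mul_le_mul_of_nonneg_left (le_of_lt hq2lt) (pow_nonneg hq2nn N)
          _ = q2^N := by ring
      calc q2^(N+1) * m ≤ q2^N * m := by
            apply mul_le_mul_of_nonneg_right this (by positivity)
        _ < (1/m) * m := by
            apply mul_lt_mul_of_pos_right hN
            exact_mod_cast hm0
        _ = 1 := by field_simp
    nlinarith [hynn (N+1) k, (hysq (N+1)).trans_lt h2]
  refine ⟨fun k => ∑ n ∈ Finset.range (N+1), y n k, ?_, ?_⟩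
  · intro k
    calc (1:ℝ) = y 0 k := (hy0 k).symm
      _ ≤ ∑ n ∈ Finset.range (N+1), y n k :=
        Finset.single_le_sum (fun n _ => hynn n k) (mem_range.mpr (by omega))
  · intro k
    have hswap : ∑ j, Z k j * ∑ n ∈ Finset.range (N+1), y n j
        = ∑ n ∈ Finset.range (N+1), y (n+1) k := by
      calc ∑ j, Z k j * ∑ n ∈ Finset.range (N+1), y n j
          = ∑ j, ∑ n ∈ Finset.range (N+1), Z k j * y n j := by
            exact Finset.sum_congr rfl fun j _ => by rw [Finset.mul_sum]
        _ = ∑ n ∈ Finset.range (N+1), ∑ j, Z k j * y n j := Finset.sum_comm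
        _ = ∑ n ∈ Finset.range (N+1), y (n+1) k :=
            Finset.sum_congr rfl fun n _ => (hysucc n k).symm
    rw [hswap]
    have e1 : ∑ n ∈ Finset.range (N+2), y n k
        = ∑ n ∈ Finset.range (N+1), y (n+1) k + y 0 k := Finset.sum_range_succ' _ _
    have e2 : ∑ n ∈ Finset.range (N+2), y n k
        = ∑ n ∈ Finset.range (N+1), y n k + y (N+1) k := Finset.sum_range_succ _ _
    have := hyNlt k
    rw [hy0] at e1
    linarith


lemma entries_ne_zero {mtx mue : ℕ} (H : Matrix (Fin mtx) (Fin mue) ℂ)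
    (hkrank : FullKruskal (Matrix.fromCols H (1 : Matrix (Fin mtx) (Fin mtx) ℂ)))
    (i : Fin mtx) (k : Fin mue) : H i k ≠ 0 := by
  intro h0
  set f : Fin mtx → (Fin mue ⊕ Fin mtx) := fun r => if r = i then Sum.inl k else Sum.inr r
    with hf
  have hinj : Function.Injective f := by
    intro r s hrs
    simp only [hf] at hrs
    by_cases hr : r = i <;> by_cases hs : s = i
    · rw [hr, hs]
    · rw [if_pos hr, if_neg hs] at hrs; exact absurd hrs (by simp)
    · rw [if_neg hr, if_pos hs] at hrs; exact absurd hrs (by simp)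
    · rw [if_neg hr, if_neg hs] at hrs; exact Sum.inr.inj hrs
  have hli := hkrank f hinj
  rw [Fintype.linearIndependent_iff] at hli
  have hzero : ∑ r, (if r = i then (1:ℂ) else -(H r k)) •
      (fun r' => Matrix.fromCols H (1 : Matrix (Fin mtx) (Fin mtx) ℂ) r' (f r)) = 0 := by
    funext r'
    simp only [Finset.sum_apply, Pi.smul_apply, smul_eq_mul, Pi.zero_apply]
    rw [Finset.sum_eq_add_sum_sdiff_singleton_of_mem (mem_univ i)]
    have h1 : (if i = i then (1:ℂ) else -(H i k)) *
        Matrix.fromCols H 1 r' (f i) = H r' k := by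
      simp [hf, Matrix.fromCols_apply_inl]
    rw [h1]
    have h2 : ∀ r ∈ univ \ {i}, (if r = i then (1:ℂ) else -(H r k)) *
        Matrix.fromCols H 1 r' (f r)
        = -(H r k) * (if r' = r then 1 else 0) := by
      intro r hr
      rw [Finset.mem_sdiff, Finset.mem_singleton] at hr
      simp [hf, hr.2, Matrix.fromCols_apply_inr, Matrix.one_apply]
    rw [Finset.sum_congr rfl h2]
    by_cases hri : r' = i
    · subst hri
      have : ∀ r ∈ univ \ {r'}, -(H r k) * (if r' = r then (1:ℂ) else 0) = 0 := by
        intro r hr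
        rw [Finset.mem_sdiff, Finset.mem_singleton] at hr
        rw [if_neg (fun h => hr.2 h.symm)]
        ring
      rw [Finset.sum_congr rfl this]
      simp [h0]
    · have hmem : r' ∈ univ \ {i} := by
        rw [Finset.mem_sdiff, Finset.mem_singleton]; exact ⟨mem_univ _, hri⟩
      rw [Finset.sum_eq_single_of_mem r' hmem (fun r hr hne => by
        rw [if_neg (fun h => hne h.symm)]; ring)]
      simp
  have := hli _ hzero i
  simp at this


set_option maxHeartbeats 1000000 in
/-- **Full power usage necessity.** -/
theorem full_power_usage_necessity {mtx mue : ℕ} (hdim : mue < mtx) (hmue : 2 ≤ mue)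
    (H P : Matrix (Fin mtx) (Fin mue) ℂ)
    (ω : Fin mue → ℝ) (hω : ∀ k, 0 < ω k)
    (β : Fin mtx → ℝ) (hβ : ∀ i, 0 < β i)
    (hkrank : FullKruskal (Matrix.fromCols H (1 : Matrix (Fin mtx) (Fin mtx) ℂ)))
    (hpareto : ParetoOptimal H ω β P)
    (hS : ∀ k, Sval H P k ≠ 0) :
    (∀ i, ∑ j, ‖P i j‖ ^ 2 = β i) ∨
      ∃ k, 1 / ((mue : ℝ) - 1) ≤ Sval H P k * Lval H P k / (Wval H P ω k) ^ 2 := by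
  by_contra hcon
  push_neg at hcon
  obtain ⟨⟨i, hine⟩, hlt⟩ := hcon
  have hslack : ∑ j, ‖P i j‖ ^ 2 < β i := lt_of_le_of_ne (hpareto.1 i) hine
  haveI : Nonempty (Fin mue) := ⟨⟨0, by omega⟩⟩
  -- basic positivity
  have hInn : ∀ k, 0 ≤ Ival H P k := fun k =>
    Finset.sum_nonneg fun j _ => by positivity
  have hWpos : ∀ k, 0 < Wval H P ω k := by
    intro k
    have h1 := hInn k
    have h2 := hω k
    unfold Wval; nlinarith
  have hSpos : ∀ k, 0 < Sval H P k := fun k =>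
    lt_of_le_of_ne (by unfold Sval; positivity) (Ne.symm (hS k))
  have hgkk : ∀ k, 0 < ‖Gmat H P k k‖ := by
    intro k
    have := hSpos k
    unfold Sval at this
    nlinarith [norm_nonneg (Gmat H P k k)]
  set a : Fin mue → ℂ := fun k => (starRingEnd ℂ) (H i k) with ha'
  have hapos : ∀ k, 0 < ‖a k‖ := by
    intro k
    have h := entries_ne_zero H hkrank i k
    rw [ha']
    dsimp only
    rw [norm_pos_iff]
    simpa using h
  -- the interaction matrix
  set Z : Matrix (Fin mue) (Fin mue) ℝ := fun k j =>
    if j = k then 0 else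
      ‖Gmat H P k j‖ * ‖Gmat H P j j‖ / Wval H P ω j with hZ
  have hZ0 : ∀ k j, 0 ≤ Z k j := by
    intro k j
    rw [hZ]
    dsimp only
    split
    · exact le_rfl
    · have := hWpos j
      positivity
  have hZd : ∀ k, Z k k = 0 := fun k => by rw [hZ]; simp
  have hZne : ∀ k j, j ≠ k → Z k j =
      ‖Gmat H P k j‖ * ‖Gmat H P j j‖ / Wval H P ω j := by
    intro k j hne; rw [hZ]; simp [hne]
  have hcol : ∀ j, ∑ k, (Z k j)^2 < 1 / ((mue:ℝ) - 1) := by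
    intro j
    have he : ∑ k ∈ univ.erase j, (Z k j)^2 = ∑ k, (Z k j)^2 :=
      Finset.sum_erase univ (by rw [hZd]; ring)
    rw [← he]
    have hterm : ∀ k ∈ univ.erase j, (Z k j)^2 =
        ‖Gmat H P k j‖^2 * (Sval H P j / (Wval H P ω j)^2) := by
      intro k hk
      rw [hZne k j (Finset.ne_of_mem_erase hk).symm]
      unfold Sval
      rw [div_pow, mul_pow]
      ring
    rw [Finset.sum_congr rfl hterm, ← Finset.sum_mul]
    have : (∑ k ∈ univ.erase j, ‖Gmat H P k j‖^2) * (Sval H P j / (Wval H P ω j)^2)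
        = Sval H P j * Lval H P j / (Wval H P ω j)^2 := by
      unfold Lval; ring
    rw [this]
    exact hlt j
  obtain ⟨μ, hμ1, hμZ⟩ := exists_subinvariant mue hmue Z hZ0 hZd hcol
  set u : Fin mue → ℝ := fun k => μ k / Wval H P ω k with hu
  have hupos : ∀ k, 0 < u k := fun k => div_pos (lt_of_lt_of_le one_pos (hμ1 k)) (hWpos k)
  set v : Fin mue → ℝ := fun k => ‖a k‖ * u k with hv
  have hvpos : ∀ k, 0 < v k := fun k => mul_pos (hapos k) (hupos k)
  set w : Fin mue → ℂ := fun j =>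
    ((‖a j‖ * u j : ℝ) : ℂ) * Gmat H P j j / a j with hw
  have hane : ∀ k, a k ≠ 0 := fun k => by
    intro h; exact absurd (by rw [h]; simp : ‖a k‖ = 0) (ne_of_gt (hapos k))
  have hwabs : ∀ j, ‖w j‖ = u j * ‖Gmat H P j j‖ := by
    intro j
    rw [hw]
    dsimp only
    rw [norm_div, norm_mul, Complex.norm_real, Real.norm_eq_abs,
      abs_of_nonneg (mul_nonneg (norm_nonneg _) (hupos j).le)]
    field_simp [ne_of_gt (hapos j)]
  have hawk : ∀ k, a k * w k = ((v k : ℝ) : ℂ) * Gmat H P k k := by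
    intro k
    rw [hw, hv]
    dsimp only
    rw [mul_div_assoc']
    rw [mul_comm (a k) _, mul_div_assoc, div_self (hane k), mul_one]
  have hawabs : ∀ k j, ‖a k * w j‖
      = ‖a k‖ * (u j * ‖Gmat H P j j‖) := by
    intro k j; rw [norm_mul, hwabs]
  -- quantities for choosing t
  set d : Fin mue → Fin mue → ℝ := fun k j =>
    ‖a k‖ * (u j * ‖Gmat H P j j‖) with hd
  have hdnn : ∀ k j, 0 ≤ d k j := fun k j =>
    mul_nonneg (norm_nonneg _) (mul_nonneg (hupos j).le (norm_nonneg _))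
  set A : Fin mue → ℝ := fun k =>
    ∑ j ∈ univ.erase k, ‖Gmat H P k j‖ * d k j with hA
  set B : Fin mue → ℝ := fun k => ∑ j ∈ univ.erase k, (d k j)^2 with hB
  have hBnn : ∀ k, 0 ≤ B k := fun k => Finset.sum_nonneg fun j _ => sq_nonneg _
  have hε : ∀ k, A k < v k * Wval H P ω k := by
    intro k
    have h1 : A k = ‖a k‖ * ∑ j ∈ univ.erase k, Z k j * μ j := by
      rw [hA, Finset.mul_sum]
      refine Finset.sum_congr rfl fun j hj => ?_
      rw [hZne k j (Finset.ne_of_mem_erase hj), hd, hu]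
      dsimp only
      field_simp
    have h2 : ∑ j ∈ univ.erase k, Z k j * μ j = ∑ j, Z k j * μ j :=
      Finset.sum_erase univ (by rw [hZd]; ring)
    have h3 : v k * Wval H P ω k = ‖a k‖ * μ k := by
      rw [hv, hu]
      dsimp only
      field_simp [ne_of_gt (hWpos k)]
    rw [h1, h2, h3]
    exact mul_lt_mul_of_pos_left (hμZ k) (hapos k)
  set Cc : ℝ := ∑ j, ‖P i j‖ * ‖w j‖ with hCc
  set D : ℝ := ∑ j, ‖w j‖^2 with hD
  have hCcnn : 0 ≤ Cc := Finset.sum_nonneg fun j _ => by positivity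
  have hDnn : 0 ≤ D := Finset.sum_nonneg fun j _ => by positivity
  set σ : ℝ := β i - ∑ j, ‖P i j‖ ^ 2 with hσ
  have hσpos : 0 < σ := by rw [hσ]; linarith
  set t : ℝ := min 1 (min (σ / (2*Cc + D + 1))
      (univ.inf' univ_nonempty (fun k => (v k * Wval H P ω k - A k) / (B k + 1)))) with ht
  have htpos : 0 < t := by
    apply lt_min one_pos
    apply lt_min
    · exact div_pos hσpos (by linarith)
    · rw [Finset.lt_inf'_iff]
      exact fun k _ => div_pos (by linarith [hε k]) (by linarith [hBnn k])
  have ht1 : t ≤ 1 := min_le_left _ _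
  have ht2 : t * (2*Cc + D + 1) ≤ σ := by
    have h : t ≤ σ / (2*Cc + D + 1) := (min_le_right 1 _).trans (min_le_left _ _)
    exact (le_div_iff₀ (by linarith : (0:ℝ) < 2*Cc + D + 1)).mp h
  have ht3 : ∀ k, t * (B k + 1) ≤ v k * Wval H P ω k - A k := by
    intro k
    have h : t ≤ (v k * Wval H P ω k - A k) / (B k + 1) :=
      ((min_le_right 1 _).trans (min_le_right _ _)).trans (Finset.inf'_le _ (mem_univ k))
    exact (le_div_iff₀ (by linarith [hBnn k] : (0:ℝ) < B k + 1)).mp h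
  -- the improved precoder
  set Q : Matrix (Fin mtx) (Fin mue) ℂ := fun r j =>
    if r = i then P r j + (t:ℂ) * w j else P r j with hQ
  have hQsplit : ∀ r (j : Fin mue), Q r j = P r j + (if r = i then (t:ℂ) * w j else 0) := by
    intro r j
    rw [hQ]
    by_cases hr : r = i
    · simp [hr]
    · simp [hr]
  have hGQ : ∀ k j, Gmat H Q k j = Gmat H P k j + (t:ℂ) * (a k * w j) := by
    intro k j
    show (Hᴴ * Q) k j = (Hᴴ * P) k j + (t:ℂ) * (a k * w j)
    rw [Matrix.mul_apply, Matrix.mul_apply]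
    calc ∑ r, Hᴴ k r * Q r j
        = ∑ r, (Hᴴ k r * P r j + (if r = i then Hᴴ k r * ((t:ℂ) * w j) else 0)) := by
          refine Finset.sum_congr rfl fun r _ => ?_
          rw [hQsplit r j, mul_add, mul_ite, mul_zero]
      _ = (∑ r, Hᴴ k r * P r j) + Hᴴ k i * ((t:ℂ) * w j) := by
          rw [Finset.sum_add_distrib,
            Finset.sum_ite_eq' univ i (fun r => Hᴴ k r * ((t:ℂ) * w j))]
          simp
      _ = (∑ r, Hᴴ k r * P r j) + (t:ℂ) * (a k * w j) := by
          have hak : Hᴴ k i = a k := rfl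
          rw [hak]
          ring
  -- power constraint for Q
  have hQpow : PowerOK β Q := by
    intro r
    by_cases hr : r = i
    · subst hr
      have hterm : ∀ j, ‖Q r j‖ ^ 2 ≤
          ‖P r j‖^2 + 2*t*(‖P r j‖ * ‖w j‖)
            + t^2 * ‖w j‖^2 := by
        intro j
        have habs : ‖Q r j‖ ≤ ‖P r j‖ + t * ‖w j‖ := by
          rw [hQ]
          simp only [if_pos rfl]
          calc ‖P r j + (t:ℂ) * w j‖
              ≤ ‖P r j‖ + ‖(t:ℂ) * w j‖ := norm_add_le _ _
            _ = ‖P r j‖ + t * ‖w j‖ := by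
                rw [norm_mul, Complex.norm_real, Real.norm_eq_abs, abs_of_pos htpos]
        nlinarith [norm_nonneg (Q r j), norm_nonneg (P r j),
          norm_nonneg (w j), htpos]
      calc ∑ j, ‖Q r j‖ ^ 2
          ≤ ∑ j, (‖P r j‖^2 + 2*t*(‖P r j‖ * ‖w j‖)
              + t^2 * ‖w j‖^2) := Finset.sum_le_sum fun j _ => hterm j
        _ = (∑ j, ‖P r j‖^2) + 2*t*Cc + t^2*D := by
            rw [Finset.sum_add_distrib, Finset.sum_add_distrib, hCc, hD,
              Finset.mul_sum, Finset.mul_sum]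
        _ ≤ β r := by nlinarith [htpos, ht1, ht2, hCcnn, hDnn, hσpos, hσ, mul_nonneg (mul_nonneg (sub_nonneg.mpr ht1) hDnn) htpos.le]
    · have : ∀ j, Q r j = P r j := fun j => by rw [hQ]; simp [hr]
      calc ∑ j, ‖Q r j‖ ^ 2 = ∑ j, ‖P r j‖ ^ 2 := by
            exact Finset.sum_congr rfl fun j _ => by rw [this]
        _ ≤ β r := hpareto.1 r
  -- SINR improvement
  have hSQ : ∀ k, Sval H Q k = Sval H P k * (1 + t * v k)^2 := by
    intro k
    have hGkk : Gmat H Q k k = Gmat H P k k * ((1 + t * v k : ℝ) : ℂ) := by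
      rw [hGQ, hawk]
      push_cast
      ring
    unfold Sval
    rw [hGkk, norm_mul, Complex.norm_real, Real.norm_eq_abs,
      abs_of_nonneg (by nlinarith [htpos, hvpos k] : (0:ℝ) ≤ 1 + t * v k)]
    ring
  have hWQ : ∀ k, Wval H Q ω k ≤ Wval H P ω k + 2*t*A k + t^2*B k := by
    intro k
    have hterm : ∀ j ∈ univ.erase k, ‖Gmat H Q k j‖ ^ 2 ≤
        ‖Gmat H P k j‖^2 + 2*t*(‖Gmat H P k j‖ * d k j)
          + t^2 * (d k j)^2 := by
      intro j _
      have habs : ‖Gmat H Q k j‖ ≤ ‖Gmat H P k j‖ + t * d k j := by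
        rw [hGQ]
        calc ‖Gmat H P k j + (t:ℂ) * (a k * w j)‖
            ≤ ‖Gmat H P k j‖ + ‖(t:ℂ) * (a k * w j)‖ :=
              norm_add_le _ _
          _ = ‖Gmat H P k j‖ + t * d k j := by
              rw [norm_mul, Complex.norm_real, Real.norm_eq_abs, abs_of_pos htpos, hawabs, hd]
      nlinarith [norm_nonneg (Gmat H Q k j), norm_nonneg (Gmat H P k j),
        hdnn k j, htpos]
    unfold Wval Ival
    have hsum : ∑ j ∈ univ.erase k, ‖Gmat H Q k j‖ ^ 2 ≤
        (∑ j ∈ univ.erase k, ‖Gmat H P k j‖^2) + 2*t*A k + t^2*B k := by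
      calc ∑ j ∈ univ.erase k, ‖Gmat H Q k j‖ ^ 2
          ≤ ∑ j ∈ univ.erase k, (‖Gmat H P k j‖^2
              + 2*t*(‖Gmat H P k j‖ * d k j) + t^2 * (d k j)^2) :=
            Finset.sum_le_sum hterm
        _ = (∑ j ∈ univ.erase k, ‖Gmat H P k j‖^2) + 2*t*A k + t^2*B k := by
            rw [Finset.sum_add_distrib, Finset.sum_add_distrib, hA, hB,
              Finset.mul_sum, Finset.mul_sum]
    linarith
  have hWQpos : ∀ k, 0 < Wval H Q ω k := by
    intro k
    have h1 : 0 ≤ Ival H Q k := Finset.sum_nonneg fun j _ => by positivity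
    have h2 := hω k
    unfold Wval; nlinarith
  have hkey : ∀ k, Wval H Q ω k < (1 + t * v k)^2 * Wval H P ω k := by
    intro k
    have h1 := hWQ k
    have h2 := hε k
    have h3 := ht3 k
    have h4 := hBnn k
    have h5 := hWpos k
    have h6 := hvpos k
    nlinarith [mul_pos htpos (sub_pos.mpr h2), mul_le_mul_of_nonneg_left h3 htpos.le,
      sq_nonneg (t * v k), mul_pos htpos htpos]
  have hsinr : ∀ k, SINR H P ω k < SINR H Q ω k := by
    intro k
    unfold SINR
    rw [hSQ, div_lt_div_iff₀ (hWpos k) (hWQpos k)]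
    calc Sval H P k * Wval H Q ω k
        < Sval H P k * ((1 + t * v k)^2 * Wval H P ω k) :=
          mul_lt_mul_of_pos_left (hkey k) (hSpos k)
      _ = Sval H P k * (1 + t * v k)^2 * Wval H P ω k := by ring
  exact hpareto.2 ⟨Q, hQpow, fun k => (hsinr k).le, ⟨Classical.arbitrary _, hsinr _⟩⟩
end

section
/- First-order SINR improvement criterion: Fix k with ω_k > 0 and let P, ΔP ∈ ℂ^{m_tx×m_ue}. If Re⟨ΔP, h_k d_k^T⟩_F > 0, then there exist α > 0 and ε₀ > 0 such that for every real ε ∈ (0, ε₀) one has SINR_k(P + εΔP) ≥ SINR_k(P) + α·ε; in particular SINR_k(P + εΔP) > SINR_k(P) for all sufficiently small ε > 0. -/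
open Matrix Finset

/-- The vector `d_k` from the closed form of the SINR gradient:
`(d_k)_k = 4 g_{kk}/W_k` and `(d_k)_j = -4 g_{kj} S_k / W_k^2` for `j ≠ k`. -/
noncomputable def dvec {mtx mue : ℕ} (H P : Matrix (Fin mtx) (Fin mue) ℂ) (ω : Fin mue → ℝ)
    (k : Fin mue) : Fin mue → ℂ := fun j =>
  if j = k then 4 * Gmat H P k k / (Wval H P ω k : ℂ)
  else -4 * Gmat H P k j * (Sval H P k : ℂ) / (Wval H P ω k : ℂ) ^ 2

/-- Frobenius inner product `⟨A, B⟩_F = tr(Bᴴ A)`. -/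
noncomputable def frobInner {mtx mue : ℕ} (A B : Matrix (Fin mtx) (Fin mue) ℂ) : ℂ :=
  ∑ i, ∑ j, A i j * (starRingEnd ℂ) (B i j)

private lemma abs_add_mul_sq (z w : ℂ) (ε : ℝ) :
    ‖z + (ε : ℂ) * w‖ ^ 2
      = ‖z‖ ^ 2 + 2 * (z * (starRingEnd ℂ) w).re * ε + ‖w‖ ^ 2 * ε ^ 2 := by
  simp only [Complex.sq_norm, Complex.normSq_apply, Complex.add_re, Complex.add_im,
    Complex.mul_re, Complex.mul_im, Complex.ofReal_re, Complex.ofReal_im,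
    Complex.conj_re, Complex.conj_im]
  ring

private lemma dterm_k (zA zG : ℂ) (x : ℝ) :
    (zA * (starRingEnd ℂ) (4 * zG / (x : ℂ))).re = 4 * (zG * (starRingEnd ℂ) zA).re / x := by
  rw [map_div₀, Complex.conj_ofReal, ← mul_div_assoc, Complex.div_ofReal_re]
  congr 1
  simp only [_root_.map_mul, Complex.mul_re, Complex.mul_im, Complex.conj_re, Complex.conj_im,
    map_ofNat, Complex.re_ofNat, Complex.im_ofNat]
  ring

private lemma dterm_j (zA zG : ℂ) (s x : ℝ) :
    (zA * (starRingEnd ℂ) (-4 * zG * (s : ℂ) / (x : ℂ) ^ 2)).re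
      = -(4 * s * (zG * (starRingEnd ℂ) zA).re) / x ^ 2 := by
  rw [← Complex.ofReal_pow, map_div₀, Complex.conj_ofReal, ← mul_div_assoc,
    Complex.div_ofReal_re]
  congr 1
  simp only [_root_.map_mul, map_neg, Complex.conj_ofReal, Complex.mul_re, Complex.mul_im,
    Complex.neg_re, Complex.neg_im, Complex.ofReal_re, Complex.ofReal_im,
    Complex.conj_re, Complex.conj_im, map_ofNat, Complex.re_ofNat, Complex.im_ofNat]
  ring

set_option maxHeartbeats 1000000 in
/-- **First-order SINR improvement criterion.** -/
theorem sinr_first_order_improvement {mtx mue : ℕ}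
    (H P ΔP : Matrix (Fin mtx) (Fin mue) ℂ) (ω : Fin mue → ℝ)
    (k : Fin mue) (hω : 0 < ω k)
    (hpos : 0 < (frobInner ΔP (Matrix.of fun i j => H i k * dvec H P ω k j)).re) :
    ∃ α : ℝ, 0 < α ∧ ∃ ε₀ : ℝ, 0 < ε₀ ∧ ∀ ε : ℝ, 0 < ε → ε < ε₀ →
      SINR H P ω k + α * ε ≤ SINR H (P + (ε : ℂ) • ΔP) ω k := by
  classical
  set g : Fin mue → ℂ := fun j => Gmat H P k j with hg
  set a : Fin mue → ℂ := fun j => (Hᴴ * ΔP) k j with ha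
  set S : ℝ := Sval H P k with hSdef
  set W : ℝ := Wval H P ω k with hWdef
  have hI : 0 ≤ Ival H P k := Finset.sum_nonneg fun j _ => by positivity
  have hW : 0 < W := by rw [hWdef]; unfold Wval; linarith only [hI, pow_pos hω 2]
  have hS0 : 0 ≤ S := by rw [hSdef]; unfold Sval; positivity
  set u : ℝ := 2 * (g k * (starRingEnd ℂ) (a k)).re with hu
  set v : ℝ := ‖a k‖ ^ 2 with hv
  set p : ℝ := 2 * ∑ j ∈ Finset.univ.erase k, (g j * (starRingEnd ℂ) (a j)).re with hp
  set q : ℝ := ∑ j ∈ Finset.univ.erase k, ‖a j‖ ^ 2 with hq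
  have hq0 : 0 ≤ q := by rw [hq]; exact Finset.sum_nonneg fun j _ => by positivity
  clear_value g a S W u v p q
  -- expansion of G along the perturbation
  have hGe : ∀ (ε : ℝ) (j : Fin mue),
      Gmat H (P + (ε : ℂ) • ΔP) k j = g j + (ε : ℂ) * a j := by
    intro ε j
    simp [Gmat, Matrix.mul_add, Matrix.mul_smul, Matrix.add_apply, Matrix.smul_apply,
      smul_eq_mul, hg, ha]
  have hSg : S = ‖g k‖ ^ 2 := by rw [hSdef]; simp [Sval, hg]
  have hSe : ∀ ε : ℝ, Sval H (P + (ε : ℂ) • ΔP) k = S + u * ε + v * ε ^ 2 := by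
    intro ε
    simp only [Sval, hGe, abs_add_mul_sq]
    rw [hSg, hu, hv]
  have hWI : W = (∑ j ∈ Finset.univ.erase k, ‖g j‖ ^ 2) + ω k ^ 2 := by
    rw [hWdef]; simp [Wval, Ival, hg]
  have hWe : ∀ ε : ℝ, Wval H (P + (ε : ℂ) • ΔP) ω k = W + p * ε + q * ε ^ 2 := by
    intro ε
    have hterm : ∀ j ∈ Finset.univ.erase k,
        ‖Gmat H (P + (ε : ℂ) • ΔP) k j‖ ^ 2
          = ‖g j‖ ^ 2 + 2 * (g j * (starRingEnd ℂ) (a j)).re * ε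
            + ‖a j‖ ^ 2 * ε ^ 2 := fun j _ => by rw [hGe, abs_add_mul_sq]
    unfold Wval Ival
    rw [Finset.sum_congr rfl hterm, Finset.sum_add_distrib, Finset.sum_add_distrib,
      ← Finset.sum_mul, ← Finset.sum_mul, hWI, hp, hq, Finset.mul_sum]
    ring
  -- computing the Frobenius inner product
  have hfrob : frobInner ΔP (Matrix.of fun i j => H i k * dvec H P ω k j)
      = ∑ j, a j * (starRingEnd ℂ) (dvec H P ω k j) := by
    rw [frobInner, Finset.sum_comm]
    refine Finset.sum_congr rfl fun j _ => ?_
    have haj : a j = ∑ i, (starRingEnd ℂ) (H i k) * ΔP i j := by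
      simp [ha, Matrix.mul_apply, Matrix.conjTranspose_apply]
    rw [haj, Finset.sum_mul]
    refine Finset.sum_congr rfl fun i _ => ?_
    simp only [Matrix.of_apply, _root_.map_mul]
    ring
  have hsum : -(4 * S * (∑ j ∈ Finset.univ.erase k, (g j * (starRingEnd ℂ) (a j)).re)) / W ^ 2
      = ∑ j ∈ Finset.univ.erase k, (-(4 * S * ((g j * (starRingEnd ℂ) (a j)).re)) / W ^ 2) := by
    rw [Finset.mul_sum, ← Finset.sum_neg_distrib, Finset.sum_div]
  have hre : (frobInner ΔP (Matrix.of fun i j => H i k * dvec H P ω k j)).re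
      = 4 * (g k * (starRingEnd ℂ) (a k)).re / W
        + ∑ j ∈ Finset.univ.erase k,
            (-(4 * S * ((g j * (starRingEnd ℂ) (a j)).re)) / W ^ 2) := by
    rw [hfrob, Complex.re_sum, ← Finset.add_sum_erase _ _ (Finset.mem_univ k)]
    congr 1
    · rw [show dvec H P ω k k = 4 * g k / (W : ℂ) by simp [dvec, hg, ← hWdef]]
      exact dterm_k _ _ _
    · refine Finset.sum_congr rfl fun j hj => ?_
      have hjk : j ≠ k := Finset.ne_of_mem_erase hj
      rw [show dvec H P ω k j = -4 * g j * (S : ℂ) / (W : ℂ) ^ 2 by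
        simp [dvec, hjk, hg, ← hSdef, ← hWdef]]
      exact dterm_j _ _ _ _
  have hW0 : W ≠ 0 := hW.ne'
  have hrval : (frobInner ΔP (Matrix.of fun i j => H i k * dvec H P ω k j)).re
      = (2 * u * W - 2 * S * p) / W ^ 2 := by
    rw [hre, ← hsum, hu, hp]
    field_simp
    ring
  have hc1pos : 0 < u * W - S * p := by
    rw [hrval] at hpos
    have h2 : 0 < (2 * u * W - 2 * S * p) / W ^ 2 * W ^ 2 := mul_pos hpos (pow_pos hW 2)
    rw [div_mul_cancel₀ _ (pow_pos hW 2).ne'] at h2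
    linarith only [h2]
  set c1 : ℝ := u * W - S * p with hc1
  set c2 : ℝ := v * W - S * q with hc2
  clear_value c1 c2
  have hden1 : (0 : ℝ) < |p| + q + 1 := by linarith [abs_nonneg p]
  have hden2 : (0 : ℝ) < 2 * (|c2| + 1) := by linarith [abs_nonneg c2]
  have h4W : (0 : ℝ) < 4 * W ^ 2 := by linarith only [pow_pos hW 2]
  set A : ℝ := c1 / (4 * W ^ 2) with hA
  have hα : 0 < A := div_pos hc1pos h4W
  have hA4 : A * (4 * W ^ 2) = c1 := by rw [hA]; exact div_mul_cancel₀ _ h4W.ne'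
  clear_value A
  refine ⟨A, hα, min 1 (min (W / (|p| + q + 1)) (c1 / (2 * (|c2| + 1)))),
    lt_min one_pos (lt_min (div_pos hW hden1) (div_pos hc1pos hden2)), ?_⟩
  intro ε hε hε₀
  have h1 : ε ≤ 1 := le_of_lt (lt_of_lt_of_le hε₀ (min_le_left _ _))
  have h2 : ε ≤ W / (|p| + q + 1) :=
    le_of_lt (lt_of_lt_of_le hε₀ ((min_le_right _ _).trans (min_le_left _ _)))
  have h3 : ε ≤ c1 / (2 * (|c2| + 1)) :=
    le_of_lt (lt_of_lt_of_le hε₀ ((min_le_right _ _).trans (min_le_right _ _)))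
  have hpq : ε * (|p| + q + 1) ≤ W := by
    rwa [le_div_iff₀ hden1] at h2
  have hεc : ε * (2 * (|c2| + 1)) ≤ c1 := by
    rwa [le_div_iff₀ hden2] at h3
  have hWεpos : 0 < W + p * ε + q * ε ^ 2 := by
    linarith only [mul_nonneg hq0 (sq_nonneg ε),
      mul_le_mul_of_nonneg_right (neg_abs_le p) hε.le,
      mul_nonneg hε.le hq0, hpq, hε]
  have hWεle : W + p * ε + q * ε ^ 2 ≤ 2 * W := by
    have hqe : q * ε * ε ≤ q * ε * 1 :=
      mul_le_mul_of_nonneg_left h1 (mul_nonneg hq0 hε.le)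
    linarith only [mul_le_mul_of_nonneg_right (le_abs_self p) hε.le, hqe, hpq, hε]
  have hc2ε : -(c1 / 2) ≤ c2 * ε := by
    linarith only [mul_le_mul_of_nonneg_right (neg_abs_le c2) hε.le, hεc, hε]
  have hc2ε' : -(c1 / 2) * ε ≤ c2 * ε * ε := mul_le_mul_of_nonneg_right hc2ε hε.le
  rw [hc1, hc2] at hc2ε'
  have hα0 : (0 : ℝ) ≤ A := hα.le
  have hαc1' : A * (4 * W ^ 2) * ε = (u * W - S * p) * ε := by
    rw [hA4, hc1]
  have hbound : A * ε * W * (W + p * ε + q * ε ^ 2)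
      ≤ A * ε * W * (2 * W) :=
    mul_le_mul_of_nonneg_left hWεle (mul_nonneg (mul_nonneg hα0 hε.le) hW.le)
  show SINR H P ω k + A * ε ≤ SINR H (P + (ε : ℂ) • ΔP) ω k
  unfold SINR
  rw [hSe ε, hWe ε, ← hSdef, ← hWdef,
    div_add' _ _ _ hW0, div_le_div_iff₀ hW hWεpos]
  linarith only [hbound, hαc1', hc2ε']
end

section
/- Rank-one structure of the SINR gradient: Fix k with ω_k > 0 and let P ∈ ℂ^{m_tx×m_ue}. There exists a real constant c > 0, independent of ΔP, such that for every ΔP ∈ ℂ^{m_tx×m_ue} the function t ↦ SINR_k(P + tΔP) (t real) is differentiable at t = 0 with derivative equal to c·Re⟨ΔP, h_k d_k^T⟩_F; that is, the real gradient of SINR_k at P is a positive multiple of the rank-one matrix h_k d_k^T. -/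
open Matrix Finset

lemma quad_deriv (a b : ℂ) :
    HasDerivAt (fun t : ℝ => ‖a + (t : ℂ) * b‖ ^ 2)
      (2 * ((starRingEnd ℂ) a * b).re) 0 := by
  have hfun : (fun t : ℝ => ‖a + (t : ℂ) * b‖ ^ 2)
      = fun t : ℝ => Complex.normSq a + (2 * ((starRingEnd ℂ) a * b).re) * t
        + Complex.normSq b * t ^ 2 := by
    funext t
    rw [Complex.sq_norm]
    simp only [Complex.normSq_apply, Complex.add_re, Complex.add_im, Complex.mul_re,
      Complex.mul_im, Complex.ofReal_re, Complex.ofReal_im, Complex.conj_re, Complex.conj_im]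
    ring
  rw [hfun]
  have h1 : HasDerivAt (fun t : ℝ => Complex.normSq a + (2 * ((starRingEnd ℂ) a * b).re) * t)
      (2 * ((starRingEnd ℂ) a * b).re) 0 := by
    simpa using ((hasDerivAt_id (0:ℝ)).const_mul (2 * ((starRingEnd ℂ) a * b).re)).const_add
      (Complex.normSq a)
  have h2 : HasDerivAt (fun t : ℝ => Complex.normSq b * t ^ 2) 0 0 := by
    simpa using (hasDerivAt_pow 2 (0:ℝ)).const_mul (Complex.normSq b)
  have h3 := h1.add h2
  simp only [add_zero] at h3
  exact h3

/-- **Rank-one structure of the SINR gradient.** There is a positive constant `c`,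
independent of `ΔP`, such that `t ↦ SINR_k (P + t ΔP)` has derivative
`c · Re⟨ΔP, h_k d_kᵀ⟩_F` at `t = 0` for every direction `ΔP`. -/
theorem sinr_gradient_rank_one {mtx mue : ℕ}
    (H P : Matrix (Fin mtx) (Fin mue) ℂ) (ω : Fin mue → ℝ)
    (k : Fin mue) (hω : 0 < ω k) :
    ∃ c : ℝ, 0 < c ∧ ∀ ΔP : Matrix (Fin mtx) (Fin mue) ℂ,
      HasDerivAt (fun t : ℝ => SINR H (P + (t : ℂ) • ΔP) ω k)
        (c * (frobInner ΔP (Matrix.of fun i j => H i k * dvec H P ω k j)).re) 0 := by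
  refine ⟨1/2, by norm_num, fun ΔP => ?_⟩
  have hI : 0 ≤ Ival H P k := Finset.sum_nonneg fun j _ => by positivity
  have hW0 : 0 < Wval H P ω k := by
    have := pow_pos hω 2
    unfold Wval; linarith
  set W := Wval H P ω k with hWdef
  set S := Sval H P k with hSdef
  set g : Fin mue → ℂ := fun j => Gmat H P k j with hg
  set e : Fin mue → ℂ := fun j => Gmat H ΔP k j with he
  -- entries of G move linearly
  have hG : ∀ (t : ℝ) (j : Fin mue),
      Gmat H (P + (t : ℂ) • ΔP) k j = g j + (t : ℂ) * e j := by
    intro t j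
    simp [Gmat, Matrix.mul_add, Matrix.mul_smul, Matrix.add_apply, Matrix.smul_apply,
      smul_eq_mul, hg, he]
  -- derivative of the signal part
  have hS : HasDerivAt (fun t : ℝ => Sval H (P + (t : ℂ) • ΔP) k)
      (2 * ((starRingEnd ℂ) (g k) * e k).re) 0 := by
    have : (fun t : ℝ => Sval H (P + (t : ℂ) • ΔP) k)
        = fun t : ℝ => ‖g k + (t : ℂ) * e k‖ ^ 2 := by
      funext t; rw [Sval, hG]
    rw [this]; exact quad_deriv _ _
  -- derivative of the denominator
  have hWd : HasDerivAt (fun t : ℝ => Wval H (P + (t : ℂ) • ΔP) ω k)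
      (∑ j ∈ Finset.univ.erase k, 2 * ((starRingEnd ℂ) (g j) * e j).re) 0 := by
    have : (fun t : ℝ => Wval H (P + (t : ℂ) • ΔP) ω k)
        = fun t : ℝ => (∑ j ∈ Finset.univ.erase k,
            ‖g j + (t : ℂ) * e j‖ ^ 2) + ω k ^ 2 := by
      funext t
      rw [Wval, Ival]
      congr 1
      exact Finset.sum_congr rfl fun j _ => by rw [hG]
    rw [this]
    exact (HasDerivAt.fun_sum fun j _ => quad_deriv (g j) (e j)).add_const _
  have hP0 : P + ((0:ℝ) : ℂ) • ΔP = P := by simp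
  have hWne : Wval H (P + ((0:ℝ) : ℂ) • ΔP) ω k ≠ 0 := by rw [hP0]; exact ne_of_gt hW0
  have hdiv := hS.div hWd hWne
  -- compute the frobenius inner product
  have hfrob : frobInner ΔP (Matrix.of fun i j => H i k * dvec H P ω k j)
      = ∑ j, e j * (starRingEnd ℂ) (dvec H P ω k j) := by
    rw [frobInner, Finset.sum_comm]
    refine Finset.sum_congr rfl fun j _ => ?_
    rw [he]
    simp only [Gmat, Matrix.mul_apply, Matrix.conjTranspose_apply, Matrix.of_apply,
      _root_.map_mul, Finset.sum_mul, starRingEnd_apply]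
    exact Finset.sum_congr rfl fun i _ => by ring
  set A : ℝ := ((starRingEnd ℂ) (g k) * e k).re with hA
  set B : ℝ := ∑ j ∈ Finset.univ.erase k, ((starRingEnd ℂ) (g j) * e j).re with hB
  have hterm : ∀ j : Fin mue, (e j * (starRingEnd ℂ) (dvec H P ω k j)).re
      = (if j = k then 4 / W else -(4 * S / W ^ 2)) * ((starRingEnd ℂ) (g j) * e j).re := by
    intro j
    by_cases hj : j = k
    · subst hj
      have hd : dvec H P ω j j = 4 * Gmat H P j j / (W : ℂ) := by
        unfold dvec
        rw [if_pos rfl, ← hWdef]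
      have h1 : e j * (starRingEnd ℂ) (4 * Gmat H P j j / (W : ℂ))
          = (((4 / W : ℝ)) : ℂ) * ((starRingEnd ℂ) (Gmat H P j j) * e j) := by
        rw [map_div₀, _root_.map_mul, Complex.conj_ofReal, map_ofNat]
        push_cast
        ring
      rw [hd, h1, Complex.re_ofReal_mul, if_pos rfl]
    · have hd : dvec H P ω k j = -4 * Gmat H P k j * (S : ℂ) / (W : ℂ) ^ 2 := by
        unfold dvec
        rw [if_neg hj, ← hWdef, ← hSdef]
      have h1 : e j * (starRingEnd ℂ) (-4 * Gmat H P k j * (S : ℂ) / (W : ℂ) ^ 2)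
          = (((-(4 * S / W ^ 2) : ℝ)) : ℂ) * ((starRingEnd ℂ) (Gmat H P k j) * e j) := by
        simp only [map_div₀, _root_.map_mul, map_neg, map_ofNat, map_pow, Complex.conj_ofReal]
        push_cast
        ring
      rw [hd, h1, Complex.re_ofReal_mul, if_neg hj]
  have hre : (frobInner ΔP (Matrix.of fun i j => H i k * dvec H P ω k j)).re
      = (4 / W) * A - (4 * S / W ^ 2) * B := by
    rw [hfrob, Complex.re_sum]
    rw [← Finset.add_sum_erase Finset.univ _ (Finset.mem_univ k)]
    rw [hterm k, if_pos rfl]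
    have : ∑ j ∈ Finset.univ.erase k, (e j * (starRingEnd ℂ) (dvec H P ω k j)).re
        = ∑ j ∈ Finset.univ.erase k, -(4 * S / W ^ 2) * ((starRingEnd ℂ) (g j) * e j).re := by
      refine Finset.sum_congr rfl fun j hj => ?_
      rw [hterm j, if_neg (Finset.mem_erase.mp hj).1]
    rw [this, ← Finset.mul_sum, ← hB, ← hA]
    ring
  -- match functions and derivative values
  have hfun : (fun t : ℝ => SINR H (P + (t : ℂ) • ΔP) ω k)
      = fun t : ℝ => Sval H (P + (t : ℂ) • ΔP) k / Wval H (P + (t : ℂ) • ΔP) ω k := rfl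
  rw [hfun]
  convert hdiv using 1
  · rfl
  · rfl
  · rfl
  rw [hre, hP0, ← hWdef, ← hSdef]
  have hB2 : ∑ j ∈ Finset.univ.erase k, 2 * ((starRingEnd ℂ) (g j) * e j).re = 2 * B := by
    rw [hB, Finset.mul_sum]
  rw [hB2]
  field_simp
  ring
end

section
/- Gershgorin consequence of a unit eigenvalue: Assume m_ue ≥ 2, ω_k > 0 and g_{kk} ≠ 0 for every k = 1,…,m_ue. If the matrix G·diag(v) has an eigenvalue equal to 1, then there exists k with S_k·L_k/W_k² ≥ 1/(m_ue − 1). -/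
open Matrix Finset

/-- The direction vector `v` with `v_k = 1/((1 + W_k/S_k)·g_{kk})`. -/
noncomputable def vvec {mtx mue : ℕ} (H P : Matrix (Fin mtx) (Fin mue) ℂ) (ω : Fin mue → ℝ) :
    Fin mue → ℂ := fun k =>
  (((1 + Wval H P ω k / Sval H P k : ℝ) : ℂ) * Gmat H P k k)⁻¹


lemma hasEigenvalue_transpose {n : Type*} [Fintype n] [DecidableEq n] {A : Matrix n n ℂ} {μ : ℂ}
    (h : Module.End.HasEigenvalue (Matrix.toLin' A) μ) :
    Module.End.HasEigenvalue (Matrix.toLin' Aᵀ) μ := by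
  obtain ⟨v, hv, hnz⟩ := h.exists_hasEigenvector
  have hv' : A.mulVec v = μ • v := by
    have := Module.End.mem_eigenspace_iff.mp hv
    rwa [Matrix.toLin'_apply] at this
  have hdet : (A - μ • 1).det = 0 := by
    rw [← Matrix.exists_mulVec_eq_zero_iff]
    exact ⟨v, hnz, by simp [Matrix.sub_mulVec, Matrix.smul_mulVec, hv']⟩
  have hdetT : (Aᵀ - μ • 1).det = 0 := by
    have : (Aᵀ - μ • 1) = (A - μ • 1)ᵀ := by
      simp [Matrix.transpose_sub, Matrix.transpose_smul]
    rw [this, Matrix.det_transpose, hdet]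
  obtain ⟨w, hwnz, hw⟩ := Matrix.exists_mulVec_eq_zero_iff.mpr hdetT
  refine Module.End.hasEigenvalue_of_hasEigenvector ⟨?_, hwnz⟩
  rw [Module.End.mem_eigenspace_iff, Matrix.toLin'_apply]
  have := hw
  rw [Matrix.sub_mulVec, Matrix.smul_mulVec, Matrix.one_mulVec, sub_eq_zero] at this
  exact this

/-- **Gershgorin consequence of a unit eigenvalue:** if `G·diag(v)` has an eigenvalue equal
to `1`, then some user `k` satisfies `S_k·L_k/W_k² ≥ 1/(m_ue − 1)`. -/
theorem gershgorin_consequence_of_unit_eigenvalue {mtx mue : ℕ} (hmue : 2 ≤ mue)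
    (H P : Matrix (Fin mtx) (Fin mue) ℂ) (ω : Fin mue → ℝ)
    (hω : ∀ k, 0 < ω k) (hg : ∀ k, Gmat H P k k ≠ 0)
    (heig : Module.End.HasEigenvalue
      (Matrix.toLin' (Gmat H P * Matrix.diagonal (vvec H P ω))) (1 : ℂ)) :
    ∃ k, 1 / ((mue : ℝ) - 1) ≤ Sval H P k * Lval H P k / (Wval H P ω k) ^ 2 := by
    classical
  have hS : ∀ k, 0 < Sval H P k := fun k =>
    pow_pos (norm_pos_iff.mpr (hg k)) 2
  have hW : ∀ k, 0 < Wval H P ω k := fun k => by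
    have hI : (0:ℝ) ≤ Ival H P k := Finset.sum_nonneg fun j _ => sq_nonneg _
    have := pow_pos (hω k) 2
    unfold Wval; linarith
  have heigT := hasEigenvalue_transpose heig
  obtain ⟨k, hk⟩ := eigenvalue_mem_ball heigT
  refine ⟨k, ?_⟩
  rw [mem_closedBall_iff_norm'] at hk
  set S := Sval H P k with hSdef
  set W := Wval H P ω k with hWdef
  set L := Lval H P k with hLdef
  set a := ‖Gmat H P k k‖ with hadef
  have ha : 0 < a := norm_pos_iff.mpr (hg k)
  have hSa : S = a ^ 2 := rfl
  have hSpos := hS k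
  have hWpos := hW k
  -- diagonal entry

  have hA : ∀ j, (Gmat H P * Matrix.diagonal (vvec H P ω))ᵀ k j
      = Gmat H P j k * vvec H P ω k := fun j => by
    simp [Matrix.transpose_apply, Matrix.mul_diagonal]
  have hcne : (((1 + W / S : ℝ) : ℂ)) ≠ 0 := by
    have : (0:ℝ) < 1 + W / S := by positivity
    exact_mod_cast ne_of_gt (show (0:ℝ) < 1 + W / S from this)
  have hdiag : (Gmat H P * Matrix.diagonal (vvec H P ω))ᵀ k k
      = (((1 + W / S : ℝ) : ℂ))⁻¹ := by
    rw [hA k]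
    unfold vvec
    rw [← hSdef, ← hWdef, _root_.mul_inv_rev]
    field_simp [hg k]
  -- norm of 1 - diagonal
  have hnorm1 : ‖(Gmat H P * Matrix.diagonal (vvec H P ω))ᵀ k k - (1:ℂ)‖ = W / (S + W) := by
    rw [hdiag]
    have heq : (((1 + W / S : ℝ) : ℂ))⁻¹ - 1 = (((1 + W / S)⁻¹ - 1 : ℝ) : ℂ) := by
      push_cast; ring
    have h1 : ((1 + W / S)⁻¹ - 1 : ℝ) = -(W / (S + W)) := by
      have hSW : S + W ≠ 0 := (add_pos hSpos hWpos).ne'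
      rw [one_add_div hSpos.ne', inv_div, div_sub_one hSW]
      ring
    rw [heq, h1, Complex.norm_real, norm_neg,
      Real.norm_of_nonneg (le_of_lt (div_pos hWpos (by linarith)))]
  -- norm of off-diagonal entries
  have hvabs : ‖vvec H P ω k‖ = a / (S + W) := by
    unfold vvec
    rw [norm_inv, norm_mul, Complex.norm_real, Real.norm_eq_abs, ← hSdef, ← hWdef, ← hadef]
    rw [abs_of_nonneg (by positivity : (0:ℝ) ≤ 1 + W / S)]
    rw [hSa]
    field_simp
  have hoff : ∀ j, ‖(Gmat H P * Matrix.diagonal (vvec H P ω))ᵀ k j‖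
      = ‖Gmat H P j k‖ * (a / (S + W)) := fun j => by
    rw [hA j]
    simp only [norm_mul, hvabs]
  rw [hnorm1] at hk
  simp only [hoff] at hk
  rw [← Finset.sum_mul] at hk
  set T := ∑ j ∈ Finset.univ.erase k, ‖Gmat H P j k‖ with hTdef
  have hT : (0:ℝ) ≤ T := Finset.sum_nonneg fun j _ => norm_nonneg _
  have hWle : W ≤ T * a := by
    have hSW : (0:ℝ) < S + W := by linarith
    rw [div_le_iff₀ hSW] at hk
    calc W ≤ T * (a / (S + W)) * (S + W) := hk
    _ = T * a := by field_simp
  -- Cauchy-Schwarz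
  have hT2 : T ^ 2 ≤ ((mue:ℝ) - 1) * L := by
    have hcard : ((Finset.univ.erase k).card : ℝ) = (mue:ℝ) - 1 := by
      rw [Finset.card_erase_of_mem (Finset.mem_univ k)]
      simp only [Finset.card_univ, Fintype.card_fin]
      rw [Nat.cast_sub (by omega : 1 ≤ mue)]
      norm_num
    have := sq_sum_le_card_mul_sum_sq (s := Finset.univ.erase k)
      (f := fun j => ‖Gmat H P j k‖)
    rw [hTdef, hLdef]
    unfold Lval
    calc T ^ 2 ≤ ((Finset.univ.erase k).card : ℝ) *
        ∑ j ∈ Finset.univ.erase k, ‖Gmat H P j k‖ ^ 2 := this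
    _ = ((mue:ℝ) - 1) * ∑ j ∈ Finset.univ.erase k, ‖Gmat H P j k‖ ^ 2 := by
        rw [hcard]
  have hmue1 : (0:ℝ) < (mue:ℝ) - 1 := by
    have : (2:ℝ) ≤ (mue:ℝ) := by exact_mod_cast hmue
    linarith
  rw [div_le_div_iff₀ hmue1 (pow_pos hWpos 2), one_mul]
  calc W ^ 2 ≤ (T * a) ^ 2 := by
        apply pow_le_pow_left₀ (le_of_lt hWpos) hWle
  _ = T ^ 2 * a ^ 2 := by ring
  _ ≤ (((mue:ℝ) - 1) * L) * a ^ 2 := by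
        apply mul_le_mul_of_nonneg_right hT2 (sq_nonneg a)
  _ = S * L * ((mue:ℝ) - 1) := by rw [hSa]; ring
end

section
/- Almost sure full Kruskal rank of a Gaussian channel: Let m > n ≥ 1 and let H be an m×n random matrix whose entries are independent standard real Gaussian random variables. Then, almost surely, the block matrix [H | I_m] ∈ ℝ^{m×(n+m)} (H augmented by the m×m identity matrix) has full Kruskal rank m. -/
open Matrix MeasureTheory ProbabilityTheory
open MvPolynomial

/-- A matrix with `m` rows has full Kruskal rank `m` if every `m` of its columns
are linearly independent. -/
def FullKruskalR {m : ℕ} {N : Type*} (A : Matrix (Fin m) N ℝ) : Prop :=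
  ∀ f : Fin m → N, Function.Injective f →
    LinearIndependent ℝ fun i => fun r => A r (f i)

instance gaussian_noAtoms : NullSingletonClass (gaussianReal 0 1) :=
  ⟨fun x => gaussianReal_absolutelyContinuous 0 one_ne_zero (measure_singleton x)⟩

lemma measurableSet_eval_zero {k : ℕ} (p : MvPolynomial (Fin k) ℝ) :
    MeasurableSet {x : Fin k → ℝ | MvPolynomial.eval x p = 0} :=
  measurableSet_eq_fun (MvPolynomial.continuous_eval (p := p)).measurable measurable_const

lemma poly_ae_ne_zero : ∀ (k : ℕ) (p : MvPolynomial (Fin k) ℝ), p ≠ 0 →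
    (Measure.pi fun _ : Fin k => gaussianReal 0 1) {x | MvPolynomial.eval x p = 0} = 0 := by
  intro k
  induction k with
  | zero =>
    intro p hp
    obtain ⟨r, rfl⟩ := MvPolynomial.C_surjective (Fin 0) p
    have hr : r ≠ 0 := fun h => hp (by rw [h, map_zero])
    convert measure_empty
    · ext x; simp [hr]
    · infer_instance
  | succ k ih =>
    intro p hp
    set q : Polynomial (MvPolynomial (Fin k) ℝ) := MvPolynomial.finSuccEquiv ℝ k p with hq
    have hq0 : q ≠ 0 := by
      simp only [hq, ne_eq, EmbeddingLike.map_eq_zero_iff]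
      exact hp
    set S : Set (Fin (k+1) → ℝ) := {x | MvPolynomial.eval x p = 0} with hS
    have hSm : MeasurableSet S := measurableSet_eval_zero p
    -- relate pi measure to product measure
    have hmp := measurePreserving_piFinSuccAbove (fun _ : Fin (k+1) => gaussianReal 0 1) 0
    set e := MeasurableEquiv.piFinSuccAbove (fun _ : Fin (k+1) => ℝ) 0 with he
    have h1 : (Measure.pi fun _ : Fin (k+1) => gaussianReal 0 1) S
        = ((gaussianReal 0 1).prod (Measure.pi fun _ : Fin k => gaussianReal 0 1))
          (e.symm ⁻¹' S) := by
      rw [← hmp.map_eq, MeasurableEquiv.map_apply]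
      congr 1
      ext x
      simp [e]
    rw [h1]
    have h2 : ((gaussianReal 0 1).prod (Measure.pi fun _ : Fin k => gaussianReal 0 1))
        (e.symm ⁻¹' S)
        = ((Measure.pi fun _ : Fin k => gaussianReal 0 1).prod (gaussianReal 0 1))
          (Prod.swap ⁻¹' (e.symm ⁻¹' S)) := by
      rw [← Measure.prod_swap, Measure.map_apply measurable_swap
        (e.symm.measurable hSm)]
    rw [h2]
    rw [Measure.measure_prod_null (measurable_swap (e.symm.measurable hSm))]
    have hlead : q.leadingCoeff ≠ 0 := Polynomial.leadingCoeff_ne_zero.2 hq0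
    have hae : ∀ᵐ s ∂(Measure.pi fun _ : Fin k => gaussianReal 0 1),
        MvPolynomial.eval s q.leadingCoeff ≠ 0 := by
      rw [ae_iff]; simpa [not_not] using ih q.leadingCoeff hlead
    filter_upwards [hae] with s hs
    -- section: {y | eval (cons y s) p = 0}
    have hsec : (Prod.mk s ⁻¹' (Prod.swap ⁻¹' (e.symm ⁻¹' S)))
        ⊆ {y | Polynomial.eval y (Polynomial.map (MvPolynomial.eval s) q) = 0} := by
      intro y hy
      simp only [Set.mem_preimage, Prod.swap_prod_mk, Set.mem_setOf_eq] at hy ⊢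
      have : e.symm (y, s) = Fin.cons y s := by
        simp only [e, MeasurableEquiv.piFinSuccAbove, MeasurableEquiv.symm_mk,
          MeasurableEquiv.coe_mk, Equiv.symm_symm, Fin.insertNthEquiv_zero]
        rfl
      rw [this] at hy
      rw [← MvPolynomial.eval_eq_eval_mv_eval']
      exact hy
    have hqs : (Polynomial.map (MvPolynomial.eval s) q) ≠ 0 := fun h => hs (by
      rw [Polynomial.leadingCoeff, ← Polynomial.coeff_map, h, Polynomial.coeff_zero])
    have hfin : {y : ℝ | Polynomial.eval y (Polynomial.map (MvPolynomial.eval s) q) = 0}.Finite :=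
      Polynomial.finite_setOf_isRoot hqs
    exact measure_mono_null hsec (hfin.measure_zero _)

lemma poly_ae_ne_zero' {m n : ℕ} (p : MvPolynomial (Fin m × Fin n) ℝ) (hp : p ≠ 0) :
    ∀ᵐ H ∂(Measure.pi fun _ : Fin m × Fin n => gaussianReal 0 1),
      MvPolynomial.eval H p ≠ 0 := by
  set e : Fin m × Fin n ≃ Fin (m * n) := finProdFinEquiv
  have hmp := measurePreserving_piCongrLeft
    (fun _ : Fin m × Fin n => gaussianReal 0 1) e.symm
  rw [ae_iff]
  simp only [not_not]
  set S : Set ((Fin m × Fin n) → ℝ) := {x | MvPolynomial.eval x p = 0} with hS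
  have hSm : MeasurableSet S :=
    measurableSet_eq_fun (MvPolynomial.continuous_eval (p := p)).measurable measurable_const
  have h1 : (Measure.pi fun _ : Fin m × Fin n => gaussianReal 0 1) S
      = (Measure.pi fun _ : Fin (m*n) => gaussianReal 0 1)
        ((MeasurableEquiv.piCongrLeft (fun _ => ℝ) e.symm) ⁻¹' S) := by
    rw [← hmp.map_eq, MeasurableEquiv.map_apply]
  rw [h1]
  have h2 : ((MeasurableEquiv.piCongrLeft (fun _ => ℝ) e.symm) ⁻¹' S)
      ⊆ {x | MvPolynomial.eval x (MvPolynomial.rename e p) = 0} := by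
    intro x hx
    simp only [Set.mem_preimage, hS, Set.mem_setOf_eq] at hx ⊢
    rw [MvPolynomial.eval_rename]
    have hco : (MeasurableEquiv.piCongrLeft (fun _ : Fin m × Fin n => ℝ) e.symm) x = x ∘ e := by
      funext i
      rw [MeasurableEquiv.coe_piCongrLeft]
      conv_lhs => rw [show i = e.symm (e i) by simp]
      exact Equiv.piCongrLeft_apply_apply (fun _ : Fin m × Fin n => ℝ) e.symm x (e i)
    rwa [hco] at hx
  refine measure_mono_null h2 (poly_ae_ne_zero _ _ ?_)
  intro h
  exact hp ((MvPolynomial.rename_injective (⇑e) e.injective) (h.trans (map_zero _).symm))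


/-- **Almost sure full Kruskal rank of a Gaussian channel:** for `m > n ≥ 1` and `H` an
`m×n` matrix with i.i.d. standard Gaussian entries, almost surely the block matrix
`[H | I_m]` has full Kruskal rank `m`. -/
theorem gaussian_block_identity_full_kruskal {m n : ℕ} (hmn : n < m) (hn : 1 ≤ n) :
    ∀ᵐ H ∂(Measure.pi fun _ : Fin m × Fin n => gaussianReal 0 1),
      FullKruskalR
        (Matrix.fromCols (Matrix.of fun i j => H (i, j))
          (1 : Matrix (Fin m) (Fin m) ℝ)) := by
  classical
  unfold FullKruskalR
  rw [ae_all_iff]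
  intro f
  by_cases hf : Function.Injective f
  swap
  · filter_upwards with H h; exact absurd h hf
  -- the determinant polynomial
  set P : MvPolynomial (Fin m × Fin n) ℝ :=
    (Matrix.of fun i r : Fin m =>
      Sum.elim (fun j => (MvPolynomial.X (r, j) : MvPolynomial (Fin m × Fin n) ℝ))
        (fun j => if r = j then 1 else 0) (f i)).det with hP
  have heval : ∀ H : (Fin m × Fin n) → ℝ, MvPolynomial.eval H P
      = (Matrix.of fun i r : Fin m =>
          (Matrix.fromCols (Matrix.of fun i j => H (i, j))
            (1 : Matrix (Fin m) (Fin m) ℝ)) r (f i)).det := by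
    intro H
    rw [hP, RingHom.map_det]
    congr 1
    ext i r
    rcases hfi : f i with j | j <;>
      simp [Matrix.map_apply, hfi, Matrix.one_apply, apply_ite]
  -- P is nonzero: witness H₀
  obtain ⟨π, hπ⟩ : ∃ π : Equiv.Perm (Fin m), ∀ i j, f i = Sum.inr j → π i = j := by
    have hbij : Function.Bijective (fun i : {i // (f i).isRight} =>
        (⟨(f i.1).getRight i.2, ⟨i.1, (Sum.inr_getRight _ i.2).symm⟩⟩ :
          {r // Sum.inr r ∈ Set.range f})) := by
      constructor
      · rintro ⟨i, hi⟩ ⟨i', hi'⟩ h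
        simp only [Subtype.mk.injEq] at h
        have : f i = f i' := by
          rw [← Sum.inr_getRight _ hi, ← Sum.inr_getRight _ hi']
          exact congrArg (fun x => (Sum.inr x.1 : Fin n ⊕ Fin m)) h
        exact Subtype.ext (hf this)
      · rintro ⟨r, ⟨i, hi⟩⟩
        refine ⟨⟨i, by rw [hi]; rfl⟩, ?_⟩
        simp only [Subtype.mk.injEq]
        have := Sum.inr_getRight (f i) (by rw [hi]; rfl)
        exact Subtype.ext (Sum.inr_injective (this.trans hi))
    refine ⟨(Equiv.ofBijective _ hbij).extendSubtype, fun i j hij => ?_⟩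
    have hri : (f i).isRight := by rw [hij]; rfl
    rw [Equiv.extendSubtype_apply_of_mem _ i hri]
    show (f i).getRight hri = j
    have := Sum.inr_getRight _ hri
    exact Sum.inr_injective (this.trans hij)
  have hPne : P ≠ 0 := by
    intro h0
    set H₀ : (Fin m × Fin n) → ℝ :=
      fun rj => if ∃ i, f i = Sum.inl rj.2 ∧ π i = rj.1 then 1 else 0 with hH₀
    have hmat : (Matrix.of fun i r : Fin m =>
        (Matrix.fromCols (Matrix.of fun i j => H₀ (i, j))
          (1 : Matrix (Fin m) (Fin m) ℝ)) r (f i))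
        = Matrix.of fun i r : Fin m => if π i = r then (1:ℝ) else 0 := by
      ext i r
      rcases hfi : f i with j | j
      · simp only [Matrix.of_apply, hfi, Matrix.fromCols_apply_inl, hH₀]
        congr 1
        simp only [eq_iff_iff]
        constructor
        · rintro ⟨i', hi', hπi'⟩
          have : i' = i := hf (by rw [hfi, hi'])
          rwa [this] at hπi'
        · intro h; exact ⟨i, hfi, h⟩
      · simp only [Matrix.of_apply, hfi, Matrix.fromCols_apply_inr, Matrix.one_apply]
        rw [hπ i j hfi]
        simp [eq_comm]
    have hli : LinearIndependent ℝ fun i => fun r =>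
        (Matrix.fromCols (Matrix.of fun i j => H₀ (i, j))
          (1 : Matrix (Fin m) (Fin m) ℝ)) r (f i) := by
      have h2 : (fun i => fun r =>
          (Matrix.fromCols (Matrix.of fun i j => H₀ (i, j))
            (1 : Matrix (Fin m) (Fin m) ℝ)) r (f i))
          = fun i => (Pi.basisFun ℝ (Fin m)) (π i) := by
        funext i r
        have := congrFun (congrFun (congrArg (fun M => M.1) (congrArg (fun M => (M, M)) hmat)) i) r
        simp only [Matrix.of_apply] at this
        rw [this, Pi.basisFun_apply]
        simp [Pi.single_apply, eq_comm]
      rw [h2]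
      exact (Pi.basisFun ℝ (Fin m)).linearIndependent.comp π π.injective
    have : MvPolynomial.eval H₀ P ≠ 0 := by
      rw [heval H₀]
      have hu : IsUnit (Matrix.of fun i r : Fin m =>
          (Matrix.fromCols (Matrix.of fun i j => H₀ (i, j))
            (1 : Matrix (Fin m) (Fin m) ℝ)) r (f i)) :=
        Matrix.linearIndependent_rows_iff_isUnit.1 hli
      exact (Matrix.isUnit_iff_isUnit_det _).1 hu |>.ne_zero
    rw [h0] at this
    simp at this
  filter_upwards [poly_ae_ne_zero' P hPne] with H hH _
  rw [heval H] at hH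
  have hu : IsUnit (Matrix.of fun i r : Fin m =>
      (Matrix.fromCols (Matrix.of fun i j => H (i, j))
        (1 : Matrix (Fin m) (Fin m) ℝ)) r (f i)) :=
    (Matrix.isUnit_iff_isUnit_det _).2 (isUnit_iff_ne_zero.2 hH)
  exact Matrix.linearIndependent_rows_iff_isUnit.2 hu
end
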